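/- Let G be a PLB graph on n vertices with exponent γ > 2 and constant c₀. Then the number of edges of G is at most C · n for a constant C depending only on c₀ and γ. -/

import Mathlib

/-- The number of vertices of `G` of degree exactly `d`. -/
noncomputable def degCount {V : Type*} [Fintype V] (G : SimpleGraph V) (d : ℕ) : ℕ :=
  {v : V | {u | G.Adj v u}.ncard = d}.ncard

/-- `G` is power-law bounded with exponent `γ` and constant `c₀` if for every `r ≥ 0`,
`Σ_{d=2^r}^{2^(r+1)} n(d) ≤ c₀ n Σ_{d=2^r}^{2^(r+1)} d^(-γ)`. -/
def IsPLB {V : Type*} [Fintype V] (G : SimpleGraph V) (γ c₀ : ℝ) : Prop :=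
  ∀ r : ℕ,
    (∑ d ∈ Finset.Icc (2 ^ r : ℕ) (2 ^ (r + 1)), (degCount G d : ℝ)) ≤
      c₀ * (Fintype.card V : ℝ) *
        ∑ d ∈ Finset.Icc (2 ^ r : ℕ) (2 ^ (r + 1)), (d : ℝ) ^ (-γ)


/-! Split the degree sum `2|E| = Σ_d d n(d)` into the dyadic blocks `[2^r, 2^(r+1)]`. In block `r`
every degree is at most `2^(r+1)`, and the PLB condition allows at most `c₀ n · 2 · 2^((1-γ)r)`
vertices there, so the block contributes at most `4 c₀ n q^r` with `q = 2^(2-γ)`. For `γ > 2` the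
ratio `q` is below `1`, and summing the geometric series gives `|E| ≤ 2 c₀ n / (1 - q)`. -/

open Finset

section Dyadic

variable {M : Type*} [AddCommMonoid M]

theorem sum_Ico_one_two_pow_eq_sum_dyadic (f : ℕ → M) (N : ℕ) :
    ∑ d ∈ Ico 1 (2 ^ N), f d = ∑ r ∈ range N, ∑ d ∈ Ico (2 ^ r) (2 ^ (r + 1)), f d := by
  induction N with
  | zero => simp
  | succ N ih =>
    rw [sum_range_succ, ← ih, sum_Ico_consecutive _ Nat.one_le_two_pow
      (Nat.pow_le_pow_right two_pos N.le_succ)]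

theorem sum_range_le_sum_dyadic_Icc [PartialOrder M] [IsOrderedAddMonoid M] {f : ℕ → M}
    (hf : ∀ d, 0 ≤ f d) (hf₀ : f 0 = 0) (N : ℕ) :
    ∑ d ∈ range N, f d ≤ ∑ r ∈ range N, ∑ d ∈ Icc (2 ^ r) (2 ^ (r + 1)), f d := calc
  ∑ d ∈ range N, f d ≤ ∑ d ∈ range (2 ^ N), f d :=
    sum_le_sum_of_subset_of_nonneg (range_subset_range.2 N.lt_two_pow_self.le) fun d _ _ => hf d
  _ = ∑ d ∈ Ico 1 (2 ^ N), f d := by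
    rw [range_eq_Ico, sum_eq_sum_Ico_succ_bot N.two_pow_pos, hf₀, zero_add]
  _ = ∑ r ∈ range N, ∑ d ∈ Ico (2 ^ r) (2 ^ (r + 1)), f d := sum_Ico_one_two_pow_eq_sum_dyadic f N
  _ ≤ ∑ r ∈ range N, ∑ d ∈ Icc (2 ^ r) (2 ^ (r + 1)), f d :=
    sum_le_sum fun r _ => sum_le_sum_of_subset_of_nonneg Ico_subset_Icc_self fun d _ _ => hf d

end Dyadic

theorem card_Icc_two_pow_le (r : ℕ) : #(Icc (2 ^ r) (2 ^ (r + 1))) ≤ 2 * 2 ^ r := by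
  rw [Nat.card_Icc, pow_succ]
  have := Nat.one_le_two_pow (n := r)
  omega

theorem sum_Icc_two_pow_rpow_neg_le {γ : ℝ} (hγ : 0 ≤ γ) (r : ℕ) :
    ∑ d ∈ Icc (2 ^ r : ℕ) (2 ^ (r + 1)), (d : ℝ) ^ (-γ) ≤ 2 * ((2 : ℝ) ^ (1 - γ)) ^ r := calc
  _ ≤ #(Icc (2 ^ r) (2 ^ (r + 1))) • ((2 : ℝ) ^ r) ^ (-γ) :=
    sum_le_card_nsmul _ _ _ fun d hd => Real.rpow_le_rpow_of_nonpos (by positivity)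
      (by exact_mod_cast (mem_Icc.1 hd).1) (neg_nonpos.2 hγ)
  _ ≤ (2 * 2 ^ r : ℕ) * ((2 : ℝ) ^ r) ^ (-γ) := by
    rw [nsmul_eq_mul]
    gcongr
    exact card_Icc_two_pow_le r
  _ = 2 * ((2 : ℝ) ^ (1 - γ)) ^ r := by
    rw [← Real.rpow_mul_natCast zero_le_two, mul_comm (1 - γ), Real.rpow_natCast_mul zero_le_two,
      sub_eq_add_neg, Real.rpow_add (by positivity), Real.rpow_one]
    push_cast
    ring

namespace SimpleGraph

variable {V : Type*} [Fintype V] (G : SimpleGraph V)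

theorem degCount_eq_card_filter_degree [DecidableRel G.Adj] (d : ℕ) :
    degCount G d = #{v | G.degree v = d} := by
  simp [degCount, Set.ncard_eq_toFinset_card', ← card_neighborSet_eq_degree]

theorem two_mul_ncard_edgeSet_eq_sum_degCount :
    2 * G.edgeSet.ncard = ∑ d ∈ range (Fintype.card V), d * degCount G d := by
  classical
  rw [← coe_edgeFinset, Set.ncard_coe_finset, ← sum_degrees_eq_twice_card_edges,
    ← sum_fiberwise_of_maps_to fun v _ => mem_range.2 (G.degree_lt_card_verts v)]
  refine sum_congr rfl fun d _ => ?_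
  rw [degCount_eq_card_filter_degree, sum_congr rfl fun v hv => (mem_filter.1 hv).2, sum_const,
    smul_eq_mul, mul_comm]

end SimpleGraph

namespace IsPLB

variable {V : Type*} [Fintype V] {G : SimpleGraph V} {γ c₀ : ℝ}

theorem sum_Icc_mul_degCount_le (hG : IsPLB G γ c₀) (hγ : 0 ≤ γ) (hc₀ : 0 ≤ c₀) (r : ℕ) :
    ∑ d ∈ Icc (2 ^ r : ℕ) (2 ^ (r + 1)), (d : ℝ) * degCount G d ≤
      4 * c₀ * Fintype.card V * ((2 : ℝ) ^ (2 - γ)) ^ r := calc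
  _ ≤ ∑ d ∈ Icc (2 ^ r : ℕ) (2 ^ (r + 1)), (2 : ℝ) ^ (r + 1) * degCount G d := by
    gcongr with d hd
    exact_mod_cast (mem_Icc.1 hd).2
  _ ≤ 2 ^ (r + 1) * (c₀ * Fintype.card V * (2 * ((2 : ℝ) ^ (1 - γ)) ^ r)) := by
    rw [← mul_sum]
    gcongr
    exact (hG r).trans (by gcongr; exact sum_Icc_two_pow_rpow_neg_le hγ r)
  _ = 4 * c₀ * Fintype.card V * ((2 : ℝ) ^ (2 - γ)) ^ r := by
    rw [show (2 : ℝ) - γ = 1 + (1 - γ) by ring, Real.rpow_add two_pos, Real.rpow_one]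
    ring

theorem two_mul_ncard_edgeSet_le (hG : IsPLB G γ c₀) (hγ : 0 ≤ γ) (hc₀ : 0 ≤ c₀) :
    2 * (G.edgeSet.ncard : ℝ) ≤
      4 * c₀ * Fintype.card V * ∑ r ∈ range (Fintype.card V), ((2 : ℝ) ^ (2 - γ)) ^ r := calc
  2 * (G.edgeSet.ncard : ℝ) = ∑ d ∈ range (Fintype.card V), (d : ℝ) * degCount G d := by
    exact_mod_cast G.two_mul_ncard_edgeSet_eq_sum_degCount
  _ ≤ ∑ r ∈ range (Fintype.card V), ∑ d ∈ Icc (2 ^ r : ℕ) (2 ^ (r + 1)), (d : ℝ) * degCount G d :=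
    sum_range_le_sum_dyadic_Icc (fun d => by positivity) (by simp) _
  _ ≤ _ := by
    rw [mul_sum]
    exact sum_le_sum fun r _ => hG.sum_Icc_mul_degCount_le hγ hc₀ r

end IsPLB

/-- A PLB graph with exponent `γ > 2` has at most `C n` edges, for a constant `C`
depending only on `c₀` and `γ`. -/
theorem plb_edge_bound (γ c₀ : ℝ) (hγ : 2 < γ) (hc₀ : 0 < c₀) :
    ∃ C : ℝ, 0 < C ∧
      ∀ (V : Type) [Fintype V] (G : SimpleGraph V), IsPLB G γ c₀ →
        (G.edgeSet.ncard : ℝ) ≤ C * (Fintype.card V : ℝ) := by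
  set q : ℝ := 2 ^ (2 - γ)
  have hq₀ : 0 < q := by positivity
  have hq₁ : q < 1 := Real.rpow_lt_one_of_one_lt_of_neg one_lt_two (by linarith)
  have hq : 0 < 1 - q := sub_pos.2 hq₁
  refine ⟨2 * c₀ / (1 - q), by positivity, fun V _ G hG => ?_⟩
  have hgeom : ∑ r ∈ range (Fintype.card V), q ^ r ≤ 1 / (1 - q) := by
    simpa [← range_eq_Ico] using geom_sum_Ico_le_of_lt_one (m := 0) hq₀.le hq₁
  have hedges := hG.two_mul_ncard_edgeSet_le (by linarith) hc₀.le
  calc (G.edgeSet.ncard : ℝ) ≤ 2 * c₀ * Fintype.card V * ∑ r ∈ range (Fintype.card V), q ^ r := by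
        linarith
    _ ≤ 2 * c₀ * Fintype.card V * (1 / (1 - q)) := by gcongr
    _ = 2 * c₀ / (1 - q) * Fintype.card V := by ring
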